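/- For the specific normalized type-I Albert algebra element E (tr E = 0, tr(E∘E)=1), the matrix commutator over 𝕆'⊗𝕆 of its null-labeled copies satisfies [Q₁E, Q₂E] = 2Q₁Q₂(E∘E) = Q₁Q₂(I + 2E*E), for anticommuting imaginary split units Q₁, Q₂. -/

import Mathlib

noncomputable section

open Finset

abbrev O8 := Fin 8 → ℝ

def octTbl (i j : Fin 8) : ℝ × Fin 8 :=
  match i.val, j.val with
  | 0, _ => (1, j)
  | _, 0 => (1, i)
  | 1, 1 => (-1, 0)
  | 1, 2 => (1, 3)
  | 1, 3 => (-1, 2)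
  | 1, 4 => (1, 5)
  | 1, 5 => (-1, 4)
  | 1, 6 => (1, 7)
  | 1, 7 => (1, 6)
  | 2, 1 => (-1, 3)
  | 2, 2 => (-1, 0)
  | 2, 3 => (1, 1)
  | 2, 4 => (-1, 6)
  | 2, 5 => (1, 7)
  | 2, 6 => (1, 4)
  | 2, 7 => (1, 5)
  | 3, 1 => (1, 2)
  | 3, 2 => (-1, 1)
  | 3, 3 => (-1, 0)
  | 3, 4 => (-1, 7)
  | 3, 5 => (1, 6)
  | 3, 6 => (-1, 5)
  | 3, 7 => (1, 4)
  | 4, 1 => (-1, 5)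
  | 4, 2 => (1, 6)
  | 4, 3 => (1, 7)
  | 4, 4 => (-1, 0)
  | 4, 5 => (1, 1)
  | 4, 6 => (-1, 2)
  | 4, 7 => (-1, 3)
  | 5, 1 => (1, 4)
  | 5, 2 => (1, 7)
  | 5, 3 => (-1, 6)
  | 5, 4 => (-1, 1)
  | 5, 5 => (-1, 0)
  | 5, 6 => (1, 3)
  | 5, 7 => (-1, 2)
  | 6, 1 => (1, 7)
  | 6, 2 => (-1, 4)
  | 6, 3 => (1, 5)
  | 6, 4 => (1, 2)
  | 6, 5 => (-1, 3)
  | 6, 6 => (-1, 0)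
  | 6, 7 => (-1, 1)
  | 7, 1 => (-1, 6)
  | 7, 2 => (-1, 5)
  | 7, 3 => (-1, 4)
  | 7, 4 => (1, 3)
  | 7, 5 => (1, 2)
  | 7, 6 => (1, 1)
  | 7, 7 => (-1, 0)
  | _, _ => (0, 0)

def soTbl (i j : Fin 8) : ℝ × Fin 8 :=
  match i.val, j.val with
  | 0, _ => (1, j)
  | _, 0 => (1, i)
  | 1, 1 => (-1, 0)
  | 1, 2 => (1, 3)
  | 1, 3 => (-1, 2)
  | 1, 4 => (1, 5)
  | 1, 5 => (-1, 4)
  | 1, 6 => (-1, 7)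
  | 1, 7 => (1, 6)
  | 2, 1 => (-1, 3)
  | 2, 2 => (-1, 0)
  | 2, 3 => (1, 1)
  | 2, 4 => (-1, 6)
  | 2, 5 => (-1, 7)
  | 2, 6 => (1, 4)
  | 2, 7 => (1, 5)
  | 3, 1 => (1, 2)
  | 3, 2 => (-1, 1)
  | 3, 3 => (-1, 0)
  | 3, 4 => (-1, 7)
  | 3, 5 => (1, 6)
  | 3, 6 => (-1, 5)
  | 3, 7 => (1, 4)
  | 4, 1 => (-1, 5)
  | 4, 2 => (1, 6)
  | 4, 3 => (1, 7)
  | 4, 4 => (1, 0)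
  | 4, 5 => (-1, 1)
  | 4, 6 => (1, 2)
  | 4, 7 => (1, 3)
  | 5, 1 => (1, 4)
  | 5, 2 => (1, 7)
  | 5, 3 => (-1, 6)
  | 5, 4 => (1, 1)
  | 5, 5 => (1, 0)
  | 5, 6 => (-1, 3)
  | 5, 7 => (1, 2)
  | 6, 1 => (1, 7)
  | 6, 2 => (-1, 4)
  | 6, 3 => (1, 5)
  | 6, 4 => (-1, 2)
  | 6, 5 => (1, 3)
  | 6, 6 => (1, 0)
  | 6, 7 => (1, 1)
  | 7, 1 => (-1, 6)
  | 7, 2 => (-1, 5)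
  | 7, 3 => (-1, 4)
  | 7, 4 => (-1, 3)
  | 7, 5 => (-1, 2)
  | 7, 6 => (-1, 1)
  | 7, 7 => (1, 0)
  | _, _ => (0, 0)

def octMul (x y : O8) : O8 := fun k =>
  ∑ i : Fin 8, ∑ j : Fin 8, x i * y j * (if (octTbl i j).2 = k then (octTbl i j).1 else 0)

def soMul (x y : O8) : O8 := fun k =>
  ∑ i : Fin 8, ∑ j : Fin 8, x i * y j * (if (soTbl i j).2 = k then (soTbl i j).1 else 0)

def oe (n : Fin 8) : O8 := fun m => if m = n then 1 else 0

def oconj (x : O8) : O8 := fun k => if k = 0 then x 0 else -x k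

def onsq (x : O8) : ℝ := ∑ k : Fin 8, (x k)^2

def octUnits : Set O8 := {oe 1, oe 2, oe 3, oe 4, oe 5, oe 6, oe 7}

abbrev AM := Fin 3 → Fin 3 → O8

def mO (A B : AM) : AM := fun i j => ∑ k : Fin 3, octMul (A i k) (B k j)

def jord (A B : AM) : AM := (1/2 : ℝ) • (mO A B + mO B A)

def trA (A : AM) : ℝ := ∑ i : Fin 3, A i i 0

def idA : AM := fun i j => if i = j then oe 0 else 0

def frd (A B : AM) : AM :=
  jord A B - (1/2 : ℝ) • ((trA A) • B + (trA B) • A)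
    + ((1/2 : ℝ) * (trA A * trA B - trA (jord A B))) • idA

def herm (A : AM) : Prop := ∀ i j, A j i = oconj (A i j)

def jdet (A : AM) : ℝ :=
  A 0 0 0 * A 1 1 0 * A 2 2 0
    + 2 * (octMul (octMul (A 0 1) (A 1 2)) (A 2 0)) 0
    - A 0 0 0 * onsq (A 1 2) - A 1 1 0 * onsq (A 2 0) - A 2 2 0 * onsq (A 0 1)

abbrev T8 := Fin 8 → Fin 8 → ℝ

def tens (a x : O8) : T8 := fun s t => a s * x t

def tMul (u v : T8) : T8 := fun a b =>
  ∑ i1 : Fin 8, ∑ i2 : Fin 8, ∑ j1 : Fin 8, ∑ j2 : Fin 8,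
    u i1 j1 * v i2 j2 *
      ((if (soTbl i1 i2).2 = a then (soTbl i1 i2).1 else 0) *
       (if (octTbl j1 j2).2 = b then (octTbl j1 j2).1 else 0))

abbrev TM := Fin 3 → Fin 3 → T8

def mT (A B : TM) : TM := fun i j => ∑ k : Fin 3, tMul (A i k) (B k j)

def commT (A B : TM) : TM := mT A B - mT B A

def lab (Q : O8) (X : AM) : TM := fun i j => tens Q (X i j)

def EI (z : ℝ) (e : O8) : AM := fun i j =>
  if i = 0 ∧ j = 0 then z • oe 0
  else if i = 1 ∧ j = 1 then (-z) • oe 0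
  else if i = 0 ∧ j = 1 then e
  else if i = 1 ∧ j = 0 then oconj e
  else 0

def D112 : AM := fun i j =>
  if i = j then (if (i : ℕ) = 2 then (-2 : ℝ) • oe 0 else oe 0) else 0


/-!
Since `Q₁` and `Q₂` anticommute, the `(i, j)` entries of `(Q₁E)(Q₂E)` and `(Q₂E)(Q₁E)` are
`Q₁Q₂ ⊗ (EE)ᵢⱼ` and `-Q₁Q₂ ⊗ (EE)ᵢⱼ`, so the commutator is `Q₁Q₂` times the anticommutator `2 E∘E`.
For the second equality, `tr E = 0` reduces the Freudenthal square to `E*E = E∘E - ½ tr(E∘E) I`,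
and `tr(E∘E) = 2(z² + |e|²) = 1`.
-/

lemma octTbl_snd_eq_zero_iff (i j : Fin 8) : (octTbl i j).2 = 0 ↔ i = j := by
  revert i j; decide

lemma octTbl_diag_fst (i : Fin 8) : (octTbl i i).1 = if i = 0 then 1 else -1 := by
  fin_cases i <;> rfl

lemma octMul_apply_zero (x y : O8) :
    octMul x y 0 = x 0 * y 0 - ∑ k : Fin 7, x k.succ * y k.succ := by
  simp only [octMul, octTbl_snd_eq_zero_iff, mul_ite, mul_zero, Finset.sum_ite_eq,
    Finset.mem_univ, if_true, octTbl_diag_fst]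
  rw [Fin.sum_univ_succ]
  simp only [Fin.succ_ne_zero, if_true, if_false, mul_one, mul_neg, Finset.sum_neg_distrib]
  ring

lemma octMul_oconj_self_apply_zero (x : O8) : octMul x (oconj x) 0 = onsq x := by
  simp [octMul_apply_zero, oconj, onsq, Fin.sum_univ_succ (n := 7), sq]

lemma oconj_octMul_self_apply_zero (x : O8) : octMul (oconj x) x 0 = onsq x := by
  simp [octMul_apply_zero, oconj, onsq, Fin.sum_univ_succ (n := 7), sq]

lemma tMul_tens (a b x y : O8) :
    tMul (tens a x) (tens b y) = tens (soMul a b) (octMul x y) := by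
  funext s t
  simp only [tMul, tens, soMul, octMul, Finset.sum_mul_sum]
  refine Finset.sum_congr rfl fun i₁ _ => ?_
  rw [Finset.sum_comm]
  exact Finset.sum_congr rfl fun i₂ _ => Finset.sum_congr rfl fun j₁ _ =>
    Finset.sum_congr rfl fun j₂ _ => by ring

lemma tens_sum {ι : Type*} (s : Finset ι) (a : O8) (x : ι → O8) :
    tens a (∑ k ∈ s, x k) = ∑ k ∈ s, tens a (x k) := by
  funext u v
  simp [tens, Finset.sum_apply, Finset.mul_sum]

lemma lab_smul (c : ℝ) (P : O8) (X : AM) : lab P (c • X) = c • lab P X := by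
  funext i j s t
  simp only [lab, tens, Pi.smul_apply, smul_eq_mul]
  ring

lemma mT_lab (P Q : O8) (X Y : AM) : mT (lab P X) (lab Q Y) = lab (soMul P Q) (mO X Y) := by
  funext i j
  simp only [mT, lab, mO, tMul_tens, tens_sum]

lemma commT_lab_of_anticomm {P Q : O8} (hPQ : soMul Q P = -soMul P Q) (X Y : AM) :
    commT (lab P X) (lab Q Y) = (2 : ℝ) • lab (soMul P Q) (jord X Y) := by
  rw [commT, mT_lab, mT_lab, hPQ]
  funext i j s t
  simp only [Pi.sub_apply, Pi.neg_apply, Pi.add_apply, Pi.smul_apply, lab, tens, jord,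
    smul_eq_mul]
  ring

lemma idA_add_two_smul_frd_self {X : AM} (htr : trA X = 0) (htr_sq : trA (jord X X) = 1) :
    idA + (2 : ℝ) • frd X X = (2 : ℝ) • jord X X := by
  rw [frd, htr, htr_sq]
  module

lemma trA_EI (z : ℝ) (e : O8) : trA (EI z e) = 0 := by
  simp [trA, Fin.sum_univ_three, EI, oe]

lemma trA_jord_EI_self (z : ℝ) (e : O8) :
    trA (jord (EI z e) (EI z e)) = 2 * (z ^ 2 + onsq e) := by
  simp only [trA, jord, mO, EI, Fin.sum_univ_three, Pi.smul_apply, Pi.add_apply, smul_eq_mul,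
    Fin.isValue, and_true, true_and, and_false, false_and, zero_ne_one, one_ne_zero,
    Fin.reduceEq, if_true, if_false, octMul_oconj_self_apply_zero, oconj_octMul_self_apply_zero]
  simp [octMul_apply_zero, oe]
  ring

theorem stmt17_general (z : ℝ) (e : O8) (hnorm : 2 * (z^2 + onsq e) = 1)
    (Q1 Q2 : O8)
    (hanti : soMul Q2 Q1 = - soMul Q1 Q2) :
    commT (lab Q1 (EI z e)) (lab Q2 (EI z e)) =
      (2 : ℝ) • lab (soMul Q1 Q2) (jord (EI z e) (EI z e)) ∧
    (2 : ℝ) • lab (soMul Q1 Q2) (jord (EI z e) (EI z e)) =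
      lab (soMul Q1 Q2) (idA + (2 : ℝ) • frd (EI z e) (EI z e)) := by
  refine ⟨commT_lab_of_anticomm hanti _ _, ?_⟩
  rw [idA_add_two_smul_frd_self (trA_EI z e) ((trA_jord_EI_self z e).trans hnorm), lab_smul]

theorem stmt17 (z : ℝ) (e : O8) (hnorm : 2 * (z^2 + onsq e) = 1)
    (Q1 Q2 : O8) (h1 : Q1 0 = 0) (h2 : Q2 0 = 0)
    (hanti : soMul Q2 Q1 = - soMul Q1 Q2) :
    commT (lab Q1 (EI z e)) (lab Q2 (EI z e)) =
      (2 : ℝ) • lab (soMul Q1 Q2) (jord (EI z e) (EI z e)) ∧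
    (2 : ℝ) • lab (soMul Q1 Q2) (jord (EI z e) (EI z e)) =
      lab (soMul Q1 Q2) (idA + (2 : ℝ) • frd (EI z e) (EI z e)) :=
  stmt17_general z e hnorm Q1 Q2 hanti
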